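/- arXiv:1111.5306 — 3 statements merged into one kernel-verified Lean document; each statement's English description precedes it below -/
import Mathlib

section
/- Let H be a finite-dimensional complex inner product space, Q : H → H unitary, e ∈ H a unit vector, and Π_acc an orthogonal projection with Π_rej = 1 - Π_acc. Let p = ‖Π_acc (Q e)‖², and let Π_init be the projection onto span{e}. Assume p > 0. Then the vector v = Q((2Π_init − 1)(Q†(Π_rej(Q e)))) satisfies ‖Π_acc v‖² = 4p(1−p)². -/
/-- The vector v = Q((2Π_init − 1)(Q†(Π_rej(Q e)))) satisfies ‖Π_acc v‖² = 4p(1−p)²,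
assuming p > 0, where p = ‖Π_acc (Q e)‖² and Π_rej = 1 - Π_acc. -/
theorem stmt_10 {H : Type*} [NormedAddCommGroup H] [InnerProductSpace ℂ H]
    [FiniteDimensional ℂ H]
    (Q : H ≃ₗᵢ[ℂ] H) (e : H) (he : ‖e‖ = 1)
    (Pinit Pacc : H →ₗ[ℂ] H)
    (hPinit : ∀ v, Pinit v = (inner ℂ e v : ℂ) • e)
    (hPacc_idem : Pacc ∘ₗ Pacc = Pacc)
    (hPacc_sym : ∀ x y, (inner ℂ (Pacc x) y : ℂ) = inner ℂ x (Pacc y))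
    (Prej : H →ₗ[ℂ] H) (hPrej : Prej = LinearMap.id - Pacc)
    (p : ℝ) (hp : p = ‖Pacc (Q e)‖ ^ 2) (hp0 : 0 < p) :
    ‖Pacc (Q (((2 : ℂ) • Pinit - LinearMap.id : H →ₗ[ℂ] H) (Q.symm (Prej (Q e)))))‖ ^ 2
      = 4 * p * (1 - p) ^ 2 := by
  set u := Q e with hu_def
  have hidem : ∀ x, Pacc (Pacc x) = Pacc x := fun x => LinearMap.congr_fun hPacc_idem x
  have hu : ‖u‖ = 1 := by simp [hu_def, he]
  have hip : (inner ℂ u (Pacc u) : ℂ) = (p : ℂ) := by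
    calc (inner ℂ u (Pacc u) : ℂ) = inner ℂ u (Pacc (Pacc u)) := by rw [hidem]
      _ = inner ℂ (Pacc u) (Pacc u) := (hPacc_sym u (Pacc u)).symm
      _ = (‖Pacc u‖ : ℂ) ^ 2 := by
          rw [inner_self_eq_norm_sq_to_K]; norm_cast
      _ = (p : ℂ) := by rw [hp]; push_cast; ring
  have h1 : Prej u = u - Pacc u := by simp [hPrej]
  have h2 : Pinit (Q.symm (Prej u)) = ((1 : ℂ) - p) • e := by
    rw [hPinit]
    congr 1
    have key : (inner ℂ e (Q.symm (Prej u)) : ℂ) = inner ℂ u (Prej u) := by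
      rw [← Q.inner_map_map e (Q.symm (Prej u)), Q.apply_symm_apply]
    rw [key, h1, inner_sub_right, hip, inner_self_eq_norm_sq_to_K, hu]
    push_cast; ring
  have hv : Pacc (Q (((2 : ℂ) • Pinit - LinearMap.id : H →ₗ[ℂ] H) (Q.symm (Prej u))))
      = ((2 : ℂ) - 2 * p) • Pacc u := by
    rw [LinearMap.sub_apply, LinearMap.smul_apply, LinearMap.id_apply, h2]
    rw [map_sub, map_smul, map_smul, Q.apply_symm_apply, h1]
    rw [map_sub, map_sub, map_smul, map_smul, hidem]
    simp only [smul_smul, sub_smul]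
    push_cast
    ring_nf
    module
  rw [hv, norm_smul]
  have : ‖(2 : ℂ) - 2 * p‖ = |2 - 2 * p| := by
    rw [show ((2 : ℂ) - 2 * p) = ((2 - 2 * p : ℝ) : ℂ) by push_cast; ring,
      Complex.norm_real, Real.norm_eq_abs]
  rw [this, mul_pow, sq_abs, ← hp]
  ring
end

section
/- Let c s : ℝ with 0 ≤ s < c ≤ 1 and set δ = c − s. Suppose p ≤ 1/2 − δ/2. Then p + 4p(1−p)² ≤ (1/2)(1 − δ)(1 + (1 + δ)²) < 1. -/
/-! The map `f p = p + 4p(1-p)²` is monotone on `(-∞, 1/2]`, so for `p ≤ 1/2 - δ/2` it is bounded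
by its value at `1/2 - δ/2`, which expands to `(1/2)(1-δ)(1+(1+δ)²) = 1 - δ²(1+δ)/2`. -/

theorem monotoneOn_add_four_mul_mul_one_sub_sq :
    MonotoneOn (fun p : ℝ => p + 4 * p * (1 - p) ^ 2) (Set.Iic (1 / 2)) := by
  intro x hx y hy hxy
  set u := 1 / 2 - x
  set v := 1 / 2 - y
  have hu : 0 ≤ u := sub_nonneg.2 hx
  have hv : 0 ≤ v := sub_nonneg.2 hy
  have hdiff : y + 4 * y * (1 - y) ^ 2 - (x + 4 * x * (1 - x) ^ 2)
      = (y - x) * (2 * (u + v) + 4 * (u ^ 2 + u * v + v ^ 2)) := by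
    simp only [u, v]; ring
  have : 0 ≤ (y - x) * (2 * (u + v) + 4 * (u ^ 2 + u * v + v ^ 2)) := by
    have := sub_nonneg.2 hxy
    positivity
  linarith

theorem add_four_mul_mul_one_sub_sq_le {δ p : ℝ} (hδ : 0 ≤ δ) (hp : p ≤ 1 / 2 - δ / 2) :
    p + 4 * p * (1 - p) ^ 2 ≤ (1 / 2) * (1 - δ) * (1 + (1 + δ) ^ 2) := by
  have hq : 1 / 2 - δ / 2 ∈ Set.Iic (1 / 2 : ℝ) := by simp only [Set.mem_Iic]; linarith
  calc p + 4 * p * (1 - p) ^ 2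
      ≤ (1 / 2 - δ / 2) + 4 * (1 / 2 - δ / 2) * (1 - (1 / 2 - δ / 2)) ^ 2 :=
        monotoneOn_add_four_mul_mul_one_sub_sq (hp.trans hq) hq hp
    _ = (1 / 2) * (1 - δ) * (1 + (1 + δ) ^ 2) := by ring

theorem half_mul_one_sub_mul_one_add_one_add_sq_lt_one {δ : ℝ} (hδ : 0 < δ) :
    (1 / 2) * (1 - δ) * (1 + (1 + δ) ^ 2) < 1 := by
  have : (1 / 2) * (1 - δ) * (1 + (1 + δ) ^ 2) = 1 - δ ^ 2 * (1 + δ) / 2 := by ring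
  rw [this]
  have : 0 < δ ^ 2 * (1 + δ) := by positivity
  linarith

theorem stmt_15_general (c s p : ℝ) (hsc : s < c) (hp : p ≤ 1 / 2 - (c - s) / 2) :
    p + 4 * p * (1 - p) ^ 2 ≤ (1 / 2) * (1 - (c - s)) * (1 + (1 + (c - s)) ^ 2) ∧
      (1 / 2) * (1 - (c - s)) * (1 + (1 + (c - s)) ^ 2) < 1 :=
  have hδ : 0 < c - s := sub_pos.2 hsc
  ⟨add_four_mul_mul_one_sub_sq_le hδ.le hp, half_mul_one_sub_mul_one_add_one_add_sq_lt_one hδ⟩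

/-- Soundness bound: if 0 ≤ s < c ≤ 1, δ = c − s, 0 ≤ p ≤ 1/2 − δ/2, then
p + 4p(1−p)² ≤ (1/2)(1−δ)(1+(1+δ)²) < 1. -/
theorem stmt_15 (c s p : ℝ) (hs : 0 ≤ s) (hsc : s < c) (hc : c ≤ 1)
    (hp0 : 0 ≤ p) (hp : p ≤ 1 / 2 - (c - s) / 2) :
    p + 4 * p * (1 - p) ^ 2 ≤ (1 / 2) * (1 - (c - s)) * (1 + (1 + (c - s)) ^ 2) ∧
      (1 / 2) * (1 - (c - s)) * (1 + (1 + (c - s)) ^ 2) < 1 :=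
  stmt_15_general c s p hsc hp
end

section
/- Every complex amplitude of the state obtained by applying a quantum circuit composed of g gates from {Hadamard, Toffoli, NOT} to a computational basis state on n qubits is a real number of the form a/√(2^h) for some integer a and some natural number h ≤ g; consequently the probability of any computational basis measurement outcome is of the form k/2^l for integers k ≥ 0 and l ≤ g. -/
/-- A gate on `n` qubits: Hadamard, Toffoli, or NOT. -/
inductive Gate (n : ℕ) where
  | had (i : Fin n)
  | toff (a b c : Fin n)
  | not (i : Fin n)

/-- The action of a single gate on a state vector in (ℂ²)^⊗n,
represented as an amplitude function on computational basis states. -/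
noncomputable def applyGate {n : ℕ} (g : Gate n) (ψ : (Fin n → Bool) → ℂ) : (Fin n → Bool) → ℂ :=
  match g with
  | .not i => fun x => ψ (Function.update x i (!x i))
  | .toff a b c => fun x => ψ (Function.update x c (xor (x c) (x a && x b)))
  | .had i => fun x =>
      ((Real.sqrt 2)⁻¹ : ℝ) *
        (ψ (Function.update x i false) +
          (if x i then (-1 : ℂ) else 1) * ψ (Function.update x i true))

/-- Running a circuit (a list of gates) on a state. -/
noncomputable def runCircuit {n : ℕ} (C : List (Gate n)) (ψ : (Fin n → Bool) → ℂ) :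
    (Fin n → Bool) → ℂ :=
  C.foldl (fun s g => applyGate g s) ψ

/-- The computational basis state |b⟩. -/
def basisState {n : ℕ} (b : Fin n → Bool) : (Fin n → Bool) → ℂ :=
  fun x => if x = b then 1 else 0

/-!
Toffoli and NOT only permute amplitudes, while a Hadamard gate replaces an amplitude by
`(z₀ ± z₁) / √2`. Hence, starting from integer amplitudes, after a circuit with `h` Hadamard
gates every amplitude is an integer divided by `√(2 ^ h)`, and its squared modulus is an
integer divided by `2 ^ h`.
-/

def IsIntDivSqrtTwoPow (h : ℕ) (z : ℂ) : Prop :=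
  ∃ a : ℤ, z = (((a : ℝ) / Real.sqrt (2 ^ h) : ℝ) : ℂ)

namespace IsIntDivSqrtTwoPow

variable {h : ℕ} {z w : ℂ}

theorem add (hz : IsIntDivSqrtTwoPow h z) (hw : IsIntDivSqrtTwoPow h w) :
    IsIntDivSqrtTwoPow h (z + w) := by
  obtain ⟨a, rfl⟩ := hz
  obtain ⟨b, rfl⟩ := hw
  exact ⟨a + b, by push_cast; ring⟩

theorem intCast_mul (c : ℤ) (hz : IsIntDivSqrtTwoPow h z) :
    IsIntDivSqrtTwoPow h (c * z) := by
  obtain ⟨a, rfl⟩ := hz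
  exact ⟨c * a, by push_cast; ring⟩

theorem inv_sqrt_two_mul (hz : IsIntDivSqrtTwoPow h z) :
    IsIntDivSqrtTwoPow (h + 1) (((Real.sqrt 2)⁻¹ : ℝ) * z) := by
  obtain ⟨a, rfl⟩ := hz
  refine ⟨a, ?_⟩
  rw [pow_succ, Real.sqrt_mul (by positivity), ← Complex.ofReal_mul]
  congr 1
  field_simp

theorem norm_sq_eq (hz : IsIntDivSqrtTwoPow h z) : ∃ k : ℕ, ‖z‖ ^ 2 = (k : ℝ) / 2 ^ h := by
  obtain ⟨a, rfl⟩ := hz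
  refine ⟨a.natAbs ^ 2, ?_⟩
  rw [Complex.norm_real, Real.norm_eq_abs, sq_abs, div_pow, Real.sq_sqrt (by positivity)]
  push_cast [Nat.cast_natAbs, Int.cast_abs, sq_abs]
  rfl

end IsIntDivSqrtTwoPow

namespace Gate

def isHad {n : ℕ} : Gate n → Bool
  | .had _ => true
  | _ => false

end Gate

section Circuits

variable {n : ℕ}

theorem isIntDivSqrtTwoPow_applyGate (g : Gate n) {h : ℕ} {ψ : (Fin n → Bool) → ℂ}
    (hψ : ∀ x, IsIntDivSqrtTwoPow h (ψ x)) (x : Fin n → Bool) :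
    IsIntDivSqrtTwoPow (h + if g.isHad then 1 else 0) (applyGate g ψ x) := by
  cases g with
  | not i => exact hψ _
  | toff a b c => exact hψ _
  | had i =>
    have hsign : (if x i then (-1 : ℂ) else 1) = ((if x i then -1 else 1 : ℤ) : ℂ) := by
      split_ifs <;> simp
    simp only [applyGate, Gate.isHad, if_true]
    rw [hsign]
    exact ((hψ _).add ((hψ _).intCast_mul _)).inv_sqrt_two_mul

theorem isIntDivSqrtTwoPow_runCircuit (C : List (Gate n)) {h : ℕ} {ψ : (Fin n → Bool) → ℂ}
    (hψ : ∀ x, IsIntDivSqrtTwoPow h (ψ x)) (x : Fin n → Bool) :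
    IsIntDivSqrtTwoPow (h + C.countP Gate.isHad) (runCircuit C ψ x) := by
  induction C generalizing h ψ with
  | nil => exact hψ x
  | cons g C ih =>
    rw [List.countP_cons, ← add_assoc, add_right_comm]
    exact ih (isIntDivSqrtTwoPow_applyGate g hψ)

theorem isIntDivSqrtTwoPow_basisState (b x : Fin n → Bool) :
    IsIntDivSqrtTwoPow 0 (basisState b x) := by
  unfold basisState
  split_ifs
  exacts [⟨1, by simp⟩, ⟨0, by simp⟩]

end Circuits

/-- Every amplitude of the state obtained by applying a {Hadamard, Toffoli, NOT} circuit of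
g gates to a computational basis state is a real number of the form a/√(2^h) with a : ℤ and
h ≤ g; consequently every measurement probability is of the form k/2^l with k ≥ 0, l ≤ g. -/
theorem stmt_16 {n : ℕ} (C : List (Gate n)) (b x : Fin n → Bool) :
    (∃ (a : ℤ) (h : ℕ), h ≤ C.length ∧
        runCircuit C (basisState b) x = (((a : ℝ) / Real.sqrt (2 ^ h) : ℝ) : ℂ)) ∧
      (∃ (k l : ℕ), l ≤ C.length ∧
        ‖runCircuit C (basisState b) x‖ ^ 2 = (k : ℝ) / 2 ^ l) := by
  have hamp := isIntDivSqrtTwoPow_runCircuit C (isIntDivSqrtTwoPow_basisState b) x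
  rw [zero_add] at hamp
  have hle : C.countP Gate.isHad ≤ C.length := List.countP_le_length
  obtain ⟨k, hk⟩ := hamp.norm_sq_eq
  obtain ⟨a, ha⟩ := hamp
  exact ⟨⟨a, _, hle, ha⟩, ⟨k, _, hle, hk⟩⟩
end
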